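/- Under the hypotheses of the Weyl-vector flipping computation, since (ρ|ρ) = (ρ̄|ρ̄) (invariance of the Weyl vector square under change of positive system), one deduces R := 4(ρ_{1/2}^♮ | ρ_{1/2}^♮ + ρ_0) − (3/8)σ − (1/2)h^∨(h^∨−2) = 0, using sdim g_{1/2} = 2h^∨ − 4 and, when σ=1, the contribution of the odd root θ/2. -/
import Mathlib

/-- From the invariance of the square of the Weyl vector under the change of the
positive root system, together with `sdim g_{1/2} = 2h^∨ − 4`, one deduces
`R = 4(ρ_{1/2}^♮ | ρ_{1/2}^♮ + ρ₀) − (3/8)σ − (1/2)h^∨(h^∨−2) = 0`. -/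
theorem weyl_vector_R_eq_zero
    {V : Type*} [AddCommGroup V] [Module ℝ V]
    (B : V →ₗ[ℝ] V →ₗ[ℝ] ℝ) (hBsymm : ∀ u v, B u v = B v u)
    (ρ ρbar ρ0 ρ12n : V) (σ hv m : ℝ)
    (hσ : σ = 0 ∨ σ = 1)
    (hm : m = 2 * hv - 4)
    (h1 : B ρ ρ = B ρ0 ρ0 + (1/2) * ((1/2) * m + 1)^2)
    (h2 : B ρbar ρbar
      = B (ρ0 + (2:ℝ) • ρ12n) (ρ0 + (2:ℝ) • ρ12n) + (1/2) * (1 - σ/2)^2)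
    (h3 : B ρ ρ = B ρbar ρbar) :
    4 * (B ρ12n ρ12n + B ρ12n ρ0) - (3/8) * σ - (1/2) * hv * (hv - 2) = 0 := by
  simp only [map_add, map_smul, LinearMap.add_apply, LinearMap.smul_apply,
    smul_eq_mul] at h2
  have hs := hBsymm ρ12n ρ0
  subst hm
  rcases hσ with h | h <;> subst h <;>
    linear_combination h1 - h2 - h3 + 2 * hs
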